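/- Let A be an abelian group, G = Aut(A) its automorphism group acting on A naturally by g·a = g(a), and let q be an integer such that multiplication by q is an automorphism of A. Then (q − 1)² annihilates H²(G, A), i.e., (q−1)²·x = 0 for every x ∈ H²(G, A). -/

import Mathlib

/-!
Multiplication by `q` is an automorphism `c` of `A` that commutes with every automorphism, so it
is a central element of `G = Aut(A)` acting on `A` as the scalar `q`. For a central `c` acting by
a scalar `r` and a 2-cocycle `f`, the cocycle identity at `(g, h, c)`, `(g, c, h)` and `(c, g, h)`
shows that `(r - 1) • f` is the coboundary of `g ↦ f(c, g) - f(g, c)`. Hence already `q - 1`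
annihilates `H²(G, A)`.
-/

/-- The natural representation of `G = Aut(A)` on the abelian group `A`, given by
`g · a = g(a)`. -/
noncomputable def natRep (A : Type) [AddCommGroup A] : Representation ℤ (Multiplicative (AddAut A)) A where
  toFun g := AddMonoidHom.toIntLinearMap (AddEquiv.toAddMonoidHom (Multiplicative.toAdd g))
  map_one' := by ext a; rfl
  map_mul' g h := by ext a; rfl

universe u

namespace groupCohomology

variable {k G : Type u} [CommRing k] [Group G] {A : Rep k G}

theorem sub_one_smul_mem_coboundaries₂_of_commute {c : G} (hc : ∀ g, Commute c g) {r : k}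
    (hρ : ∀ a : A, A.ρ c a = r • a) (f : cocycles₂ A) :
    (r - 1) • ⇑f ∈ coboundaries₂ A := by
  refine ⟨fun g => f (c, g) - f (g, c), ?_⟩
  ext ⟨g, h⟩
  have hf := (mem_cocycles₂_iff (f : G × G → A)).1 f.2
  have h₁ := hf g h c
  have h₂ := hf g c h
  have h₃ := hf c g h
  rw [← (hc h).eq] at h₁
  rw [← (hc g).eq] at h₂
  rw [hρ] at h₃
  simp only [d₁₂_hom_apply, map_sub, Pi.smul_apply]
  linear_combination (norm := module) h₁ - h₂ + h₃

theorem sub_one_smul_H2_eq_zero_of_commute {c : G} (hc : ∀ g, Commute c g) {r : k}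
    (hρ : ∀ a : A, A.ρ c a = r • a) (x : H2 A) : (r - 1) • x = 0 := by
  induction x using H2_induction_on with | h f =>
  rw [← map_smul, H2π_eq_zero_iff]
  exact sub_one_smul_mem_coboundaries₂_of_commute hc hρ f

end groupCohomology

theorem AddAut.addCommute_of_forall_apply_eq_zsmul {A : Type*} [AddCommGroup A] {q : ℤ}
    {c : AddAut A} (hc : ∀ a, c a = q • a) (g : AddAut A) : AddCommute c g := by
  ext a
  simp only [AddAut.add_apply, hc, map_zsmul]

open groupCohomology in
/-- Let `A` be an abelian group, `G = Aut(A)` acting naturally on `A`,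
and `q` an integer such that multiplication by `q` is an automorphism of `A`. Then
`(q - 1)²` annihilates `H²(G, A)`. -/
theorem sub_one_sq_annihilates_H2_natural (A : Type) [AddCommGroup A] (q : ℤ)
    (hq : Function.Bijective fun a : A => q • a) :
    ∀ x : H2 (Rep.of (natRep A)), (q - 1) ^ 2 • x = 0 := by
  intro x
  obtain ⟨c, hc⟩ : ∃ c : AddAut A, ∀ a, c a = q • a :=
    ⟨AddEquiv.ofBijective (zsmulAddGroupHom q) hq, fun _ => rfl⟩
  -- The lemma uses the `Module ℤ` scalar action on `H2`, the statement the `zsmul` one.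
  have hx : (q - 1) • x = 0 := (int_smul_eq_zsmul _ _ _).symm.trans <|
    sub_one_smul_H2_eq_zero_of_commute (c := Multiplicative.ofAdd c)
      (fun g => AddAut.addCommute_of_forall_apply_eq_zsmul hc (Multiplicative.toAdd g)) hc x
  rw [sq, mul_smul, hx, zsmul_zero]
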